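/- (Zygmund's restriction theorem on the two-dimensional torus.) For every r > 0 and every square-summable family of complex coefficients (c_ω)_{ω∈ℤ²}, the trigonometric sum f(x,y) = ∑_{ω∈ℤ², ω₁²+ω₂²=r²} c_ω e^{2πi(ω₁x+ω₂y)} (a finite sum) satisfies ‖f‖_{L⁴([0,1]²)} ≤ 5^{1/4} · (∑_{ω∈ℤ²} |c_ω|²)^{1/2}. -/

import Mathlib

/-!
Write `f = ∑_{ω ∈ F} c ω e_ω` with `F` the lattice points on the circle. Then `f²` is the
trigonometric polynomial with coefficients the autoconvolution `W ν = ∑_{ω + ω' = ν} c ω c ω'`,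
so Parseval gives `‖f‖₄⁴ = ‖f²‖₂² = ∑_ν |W ν|²`. By Cauchy–Schwarz `|W 0|² ≤ S²` with
`S = ∑ |c ω|²`. For `ν ≠ 0` the points `ω ∈ F` with `ν - ω ∈ F` lie on a line and a circle, so
there are at most two of them, and `|W ν|² ≤ 2 ∑_{ω + ω' = ν} |c ω c ω'|²`; summing over
`ν ≠ 0` gives at most `2 S²`. Altogether `‖f‖₄⁴ ≤ 3 S² ≤ 5 S²`.
-/

open MeasureTheory Complex Real Finset Pointwise
open scoped ComplexConjugate Classical

section Autoconvolution

variable {G R : Type*} [AddCancelCommMonoid G] [DecidableEq G] [SeminormedRing R]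

def autoconvolution (F : Finset G) (c : G → R) (ν : G) : R :=
  ∑ p ∈ F ×ˢ F with p.1 + p.2 = ν, c p.1 * c p.2

lemma sum_fiber_fst_le (F : Finset G) (ν : G) {φ : G → ℝ} (hφ : ∀ ω, 0 ≤ φ ω) :
    ∑ p ∈ F ×ˢ F with p.1 + p.2 = ν, φ p.1 ≤ ∑ ω ∈ F, φ ω := by
  set R := {p ∈ F ×ˢ F | p.1 + p.2 = ν}
  have hinj : Set.InjOn Prod.fst (R : Set (G × G)) := by
    intro p hp q hq h
    simp only [R, coe_filter, Set.mem_ofPred_eq] at hp hq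
    exact Prod.ext h (add_left_cancel (hp.2.trans (h ▸ hq.2.symm)))
  rw [← sum_image hinj]
  refine sum_le_sum_of_subset_of_nonneg (fun ω hω => ?_) fun ω _ _ => hφ ω
  obtain ⟨p, hp, rfl⟩ := mem_image.1 hω
  exact (mem_product.1 (mem_filter.1 hp).1).1

lemma sum_fiber_snd_le (F : Finset G) (ν : G) {φ : G → ℝ} (hφ : ∀ ω, 0 ≤ φ ω) :
    ∑ p ∈ F ×ˢ F with p.1 + p.2 = ν, φ p.2 ≤ ∑ ω ∈ F, φ ω := by
  have hswap : ∑ p ∈ F ×ˢ F with p.1 + p.2 = ν, φ p.2 = ∑ p ∈ F ×ˢ F with p.1 + p.2 = ν, φ p.1 :=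
    sum_nbij' Prod.swap Prod.swap (by simp [add_comm, and_comm]) (by simp [add_comm, and_comm])
      (by simp) (by simp) (by simp)
  exact hswap ▸ sum_fiber_fst_le F ν hφ

lemma norm_autoconvolution_le (F : Finset G) (c : G → R) (ν : G) :
    ‖autoconvolution F c ν‖ ≤ ∑ p ∈ F ×ˢ F with p.1 + p.2 = ν, ‖c p.1‖ * ‖c p.2‖ :=
  (norm_sum_le _ _).trans (sum_le_sum fun _ _ => norm_mul_le _ _)

lemma norm_autoconvolution_sq_le (F : Finset G) (c : G → R) (ν : G) :
    ‖autoconvolution F c ν‖ ^ 2 ≤ (∑ ω ∈ F, ‖c ω‖ ^ 2) ^ 2 :=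
  calc ‖autoconvolution F c ν‖ ^ 2
      ≤ (∑ p ∈ F ×ˢ F with p.1 + p.2 = ν, ‖c p.1‖ * ‖c p.2‖) ^ 2 :=
        pow_le_pow_left₀ (norm_nonneg _) (norm_autoconvolution_le F c ν) 2
    _ ≤ (∑ p ∈ F ×ˢ F with p.1 + p.2 = ν, ‖c p.1‖ ^ 2) *
          ∑ p ∈ F ×ˢ F with p.1 + p.2 = ν, ‖c p.2‖ ^ 2 :=
        sum_mul_sq_le_sq_mul_sq _ _ _
    _ ≤ (∑ ω ∈ F, ‖c ω‖ ^ 2) ^ 2 := by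
        rw [sq]
        have hφ : ∀ ω, 0 ≤ ‖c ω‖ ^ 2 := fun _ => by positivity
        exact mul_le_mul (sum_fiber_fst_le F ν hφ) (sum_fiber_snd_le F ν hφ)
          (sum_nonneg fun _ _ => hφ _) (sum_nonneg fun _ _ => hφ _)

lemma norm_autoconvolution_sq_le_card_mul (F : Finset G) (c : G → R) (ν : G) :
    ‖autoconvolution F c ν‖ ^ 2 ≤
      #{p ∈ F ×ˢ F | p.1 + p.2 = ν} * ∑ p ∈ F ×ˢ F with p.1 + p.2 = ν, (‖c p.1‖ * ‖c p.2‖) ^ 2 :=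
  (pow_le_pow_left₀ (norm_nonneg _) (norm_autoconvolution_le F c ν) 2).trans
    sq_sum_le_card_mul_sum_sq

lemma sum_norm_autoconvolution_sq_le (F : Finset G) (c : G → R)
    (hF : ∀ ν ≠ 0, #{p ∈ F ×ˢ F | p.1 + p.2 = ν} ≤ 2) :
    ∑ ν ∈ F + F, ‖autoconvolution F c ν‖ ^ 2 ≤ 3 * (∑ ω ∈ F, ‖c ω‖ ^ 2) ^ 2 := by
  set S := ∑ ω ∈ F, ‖c ω‖ ^ 2
  have hoff : ∑ ν ∈ (F + F).erase 0, ‖autoconvolution F c ν‖ ^ 2 ≤ 2 * S ^ 2 :=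
    calc ∑ ν ∈ (F + F).erase 0, ‖autoconvolution F c ν‖ ^ 2
        ≤ ∑ ν ∈ (F + F).erase 0,
            2 * ∑ p ∈ F ×ˢ F with p.1 + p.2 = ν, (‖c p.1‖ * ‖c p.2‖) ^ 2 := by
          refine sum_le_sum fun ν hν => (norm_autoconvolution_sq_le_card_mul F c ν).trans ?_
          gcongr
          exact_mod_cast hF ν (ne_of_mem_erase hν)
      _ ≤ 2 * ∑ p ∈ F ×ˢ F, (‖c p.1‖ * ‖c p.2‖) ^ 2 := by
          rw [← mul_sum]
          gcongr
          exact sum_fiberwise_le_sum_of_sum_fiber_nonneg fun _ _ => by positivity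
      _ = 2 * S ^ 2 := by
          rw [sq S, sum_mul_sum, sum_product]
          simp only [mul_pow]
  calc ∑ ν ∈ F + F, ‖autoconvolution F c ν‖ ^ 2
      ≤ ∑ ν ∈ insert 0 ((F + F).erase 0), ‖autoconvolution F c ν‖ ^ 2 :=
        sum_le_sum_of_subset_of_nonneg (insert_erase_subset _ _) fun _ _ _ => by positivity
    _ = ‖autoconvolution F c 0‖ ^ 2 + ∑ ν ∈ (F + F).erase 0, ‖autoconvolution F c ν‖ ^ 2 :=
        sum_insert (notMem_erase _ _)
    _ ≤ 3 * S ^ 2 := by linarith [norm_autoconvolution_sq_le F c 0]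

end Autoconvolution

lemma card_fiber_le_two_of_sq_add_sq_eq {F : Finset (ℤ × ℤ)}
    (hF : ∀ ω ∈ F, ∀ ω' ∈ F, ω.1 ^ 2 + ω.2 ^ 2 = ω'.1 ^ 2 + ω'.2 ^ 2) {ν : ℤ × ℤ} (hν : ν ≠ 0) :
    #{p ∈ F ×ˢ F | p.1 + p.2 = ν} ≤ 2 := by
  obtain ⟨a, b⟩ := ν
  have hN : 2 * (a ^ 2 + b ^ 2) ≠ 0 := by
    refine mul_ne_zero two_ne_zero fun h => hν ?_
    rw [Prod.mk_eq_zero]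
    constructor <;> nlinarith [sq_nonneg a, sq_nonneg b]
  set R := {p ∈ F ×ˢ F | p.1 + p.2 = (a, b)}
  have hR : ∀ p ∈ R, p.1 ∈ F ∧ p.2 = (a - p.1.1, b - p.1.2) ∧
      2 * (p.1.1 * a + p.1.2 * b) = a ^ 2 + b ^ 2 := by
    intro p hp
    obtain ⟨hpF, hpν⟩ := mem_filter.1 hp
    obtain ⟨h1, h2⟩ := mem_product.1 hpF
    have hp2 : p.2 = (a - p.1.1, b - p.1.2) := eq_sub_of_add_eq' hpν
    refine ⟨h1, hp2, ?_⟩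
    have := hF _ h1 _ h2
    rw [hp2] at this
    linear_combination this
  -- `u = p.1` is determined by `u ⬝ ν = |ν|² / 2` and the cross product `u × ν`, and Lagrange's
  -- identity `(u ⬝ ν)² + (u × ν)² = |u|² |ν|²` leaves only two possible values for `u × ν`.
  let cross : (ℤ × ℤ) × (ℤ × ℤ) → ℤ := fun p => p.1.1 * b - p.1.2 * a
  have hinj : Set.InjOn cross R := by
    intro p hp q hq h
    obtain ⟨-, hp2, hpd⟩ := hR p hp
    obtain ⟨-, hq2, hqd⟩ := hR q hq
    simp only [cross] at h
    have h1 : p.1.1 = q.1.1 :=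
      mul_left_cancel₀ hN (by linear_combination a * hpd - a * hqd + 2 * b * h)
    have h2 : p.1.2 = q.1.2 :=
      mul_left_cancel₀ hN (by linear_combination b * hpd - b * hqd - 2 * a * h)
    have h12 : p.1 = q.1 := Prod.ext h1 h2
    exact Prod.ext h12 (by rw [hp2, hq2, h12])
  rcases R.eq_empty_or_nonempty with hempty | ⟨p₀, hp₀⟩
  · simp [hempty]
  have hmaps : Set.MapsTo cross R ({cross p₀, -cross p₀} : Finset ℤ) := by
    intro p hp
    obtain ⟨hpF, -, hpd⟩ := hR p hp
    obtain ⟨hp₀F, -, hp₀d⟩ := hR p₀ hp₀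
    have hnorm := hF _ hpF _ hp₀F
    have hsq : cross p ^ 2 = cross p₀ ^ 2 := by
      refine mul_left_cancel₀ (four_ne_zero (α := ℤ)) ?_
      simp only [cross]
      linear_combination 4 * (a ^ 2 + b ^ 2) * hnorm
        - (2 * (p.1.1 * a + p.1.2 * b) + a ^ 2 + b ^ 2) * hpd
        + (2 * (p₀.1.1 * a + p₀.1.2 * b) + a ^ 2 + b ^ 2) * hp₀d
    simpa using sq_eq_sq_iff_eq_or_eq_neg.1 hsq
  exact (card_le_card_of_injOn cross hmaps hinj).trans card_le_two

noncomputable def torusChar (ν : ℤ × ℤ) (z : ℝ × ℝ) : ℂ :=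
  exp (2 * π * I * (ν.1 * z.1 + ν.2 * z.2))

def unitSquare : Set (ℝ × ℝ) := Set.Icc 0 1 ×ˢ Set.Icc 0 1

@[fun_prop]
lemma continuous_torusChar (ν : ℤ × ℤ) : Continuous (torusChar ν) := by
  unfold torusChar
  fun_prop

lemma torusChar_add (μ ν : ℤ × ℤ) (z : ℝ × ℝ) :
    torusChar (μ + ν) z = torusChar μ z * torusChar ν z := by
  simp only [torusChar, ← Complex.exp_add, Prod.fst_add, Prod.snd_add, Int.cast_add]
  ring_nf

lemma conj_torusChar (ν : ℤ × ℤ) (z : ℝ × ℝ) : conj (torusChar ν z) = torusChar (-ν) z := by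
  simp only [torusChar, ← exp_conj, map_mul, map_add, conj_ofReal, conj_I, map_intCast, map_ofNat,
    Prod.fst_neg, Prod.snd_neg, Int.cast_neg]
  ring_nf

lemma torusChar_eq_mul (ν : ℤ × ℤ) (z : ℝ × ℝ) :
    torusChar ν z = exp (2 * π * I * ν.1 * z.1) * exp (2 * π * I * ν.2 * z.2) := by
  rw [torusChar, ← Complex.exp_add]
  ring_nf

lemma integral_Icc_exp_two_pi_I_int_mul (n : ℤ) :
    ∫ x in Set.Icc (0 : ℝ) 1, exp (2 * π * I * n * x) = if n = 0 then 1 else 0 := by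
  rw [integral_Icc_eq_integral_Ioc, ← intervalIntegral.integral_of_le zero_le_one]
  split_ifs with hn
  · simp [hn]
  have hne : 2 * π * I * n ≠ 0 := by simp [hn, pi_ne_zero]
  rw [integral_exp_mul_complex hne, ofReal_one, ofReal_zero, mul_zero, Complex.exp_zero, mul_one,
    show 2 * π * I * n = n * (2 * π * I) by ring, exp_int_mul_two_pi_mul_I, sub_self, zero_div]

section UnitSquare

variable {E : Type*} [NormedAddCommGroup E] {f : ℝ × ℝ → E}

lemma integrableOn_unitSquare (hf : Continuous f) : IntegrableOn f unitSquare :=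
  hf.continuousOn.integrableOn_compact (isCompact_Icc.prod isCompact_Icc)

lemma integral_unitSquare_eq_iterated [NormedSpace ℝ E] (hf : Continuous f) :
    ∫ z in unitSquare, f z = ∫ x in Set.Icc (0 : ℝ) 1, ∫ y in Set.Icc (0 : ℝ) 1, f (x, y) :=
  setIntegral_prod f (integrableOn_unitSquare hf)

end UnitSquare

lemma integral_unitSquare_torusChar (ν : ℤ × ℤ) :
    ∫ z in unitSquare, torusChar ν z = if ν = 0 then 1 else 0 := by
  simp only [unitSquare, torusChar_eq_mul]
  refine (setIntegral_prod_mul (μ := volume) (ν := volume) (fun x : ℝ => exp (2 * π * I * ν.1 * x))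
    (fun y : ℝ => exp (2 * π * I * ν.2 * y)) _ _).trans ?_
  rw [integral_Icc_exp_two_pi_I_int_mul, integral_Icc_exp_two_pi_I_int_mul]
  by_cases h₁ : ν.1 = 0 <;> by_cases h₂ : ν.2 = 0 <;> simp [h₁, h₂, Prod.ext_iff]

lemma integral_unitSquare_norm_sum_sq (V : Finset (ℤ × ℤ)) (a : ℤ × ℤ → ℂ) :
    ∫ z in unitSquare, ‖∑ ν ∈ V, a ν * torusChar ν z‖ ^ 2 = ∑ ν ∈ V, ‖a ν‖ ^ 2 := by
  have hexpand : ∀ z, ((‖∑ ν ∈ V, a ν * torusChar ν z‖ ^ 2 : ℝ) : ℂ) =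
      ∑ μ ∈ V, ∑ ν ∈ V, a μ * conj (a ν) * torusChar (μ - ν) z := by
    intro z
    rw [ofReal_pow, ← mul_conj', map_sum, sum_mul_sum]
    refine sum_congr rfl fun μ _ => sum_congr rfl fun ν _ => ?_
    rw [map_mul, conj_torusChar, sub_eq_add_neg, torusChar_add]
    ring
  have hint : ∀ μ ν, Integrable (fun z => a μ * conj (a ν) * torusChar (μ - ν) z)
      (volume.restrict unitSquare) := fun μ ν => integrableOn_unitSquare (by fun_prop)
  apply ofReal_injective
  rw [← integral_complex_ofReal]
  simp only [hexpand]
  rw [integral_finsetSum _ fun μ _ => integrable_finsetSum _ fun ν _ => hint μ ν]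
  simp only [integral_finsetSum _ fun ν _ => hint _ ν, integral_const_mul,
    integral_unitSquare_torusChar, sub_eq_zero, mul_ite, mul_one, mul_zero, sum_ite_eq]
  push_cast
  exact sum_congr rfl fun μ hμ => by rw [if_pos hμ, mul_conj']

lemma sum_torusChar_sq (F : Finset (ℤ × ℤ)) (c : ℤ × ℤ → ℂ) (z : ℝ × ℝ) :
    (∑ ω ∈ F, c ω * torusChar ω z) ^ 2 = ∑ ν ∈ F + F, autoconvolution F c ν * torusChar ν z := by
  rw [sq, sum_mul_sum, ← sum_product', ← sum_fiberwise_of_maps_to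
    (g := fun p : (ℤ × ℤ) × (ℤ × ℤ) => p.1 + p.2) (t := F + F)
    fun p hp => add_mem_add (mem_product.1 hp).1 (mem_product.1 hp).2]
  refine sum_congr rfl fun ν _ => ?_
  rw [autoconvolution, sum_mul]
  refine sum_congr rfl fun p hp => ?_
  rw [← (mem_filter.1 hp).2, torusChar_add]
  ring

lemma integral_unitSquare_norm_sum_pow_four (F : Finset (ℤ × ℤ)) (c : ℤ × ℤ → ℂ) :
    ∫ z in unitSquare, ‖∑ ω ∈ F, c ω * torusChar ω z‖ ^ 4 =
      ∑ ν ∈ F + F, ‖autoconvolution F c ν‖ ^ 2 := by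
  simp only [show ∀ w : ℂ, ‖w‖ ^ 4 = ‖w ^ 2‖ ^ 2 by intro w; rw [norm_pow, ← pow_mul],
    sum_torusChar_sq]
  exact integral_unitSquare_norm_sum_sq _ _

lemma finite_setOf_sq_add_sq_eq (r : ℝ) :
    {ω : ℤ × ℤ | (ω.1 : ℝ) ^ 2 + (ω.2 : ℝ) ^ 2 = r ^ 2}.Finite := by
  set M := ⌈|r|⌉
  have hbound : ∀ m n : ℤ, (m : ℝ) ^ 2 + (n : ℝ) ^ 2 = r ^ 2 → -M ≤ m ∧ m ≤ M := by
    intro m n h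
    have hm : |(m : ℝ)| ≤ M :=
      (sq_le_sq.1 (show (m : ℝ) ^ 2 ≤ r ^ 2 by nlinarith [sq_nonneg (n : ℝ)])).trans
        (Int.le_ceil _)
    exact abs_le.1 (by exact_mod_cast hm)
  refine (Set.finite_Icc ((-M, -M) : ℤ × ℤ) (M, M)).subset fun ω hω => ?_
  have h₁ := hbound ω.1 ω.2 hω
  have h₂ := hbound ω.2 ω.1 (by rw [add_comm]; exact hω)
  exact ⟨⟨h₁.1, h₂.1⟩, h₁.2, h₂.2⟩

lemma integral_unitSquare_norm_sum_pow_four_le {F : Finset (ℤ × ℤ)}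
    (hF : ∀ ω ∈ F, ∀ ω' ∈ F, ω.1 ^ 2 + ω.2 ^ 2 = ω'.1 ^ 2 + ω'.2 ^ 2) (c : ℤ × ℤ → ℂ) :
    ∫ z in unitSquare, ‖∑ ω ∈ F, c ω * torusChar ω z‖ ^ 4 ≤ 3 * (∑ ω ∈ F, ‖c ω‖ ^ 2) ^ 2 :=
  integral_unitSquare_norm_sum_pow_four F c ▸
    sum_norm_autoconvolution_sq_le F c fun _ hν => card_fiber_le_two_of_sq_add_sq_eq hF hν

theorem zygmund_restriction (r : ℝ) (c : ℤ × ℤ → ℂ)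
    (hc : Summable fun ω : ℤ × ℤ => ‖c ω‖ ^ 2) :
    (∫ x in Set.Icc (0:ℝ) 1, ∫ y in Set.Icc (0:ℝ) 1,
        ‖∑' ω : ℤ × ℤ, if ((ω.1 : ℝ) ^ 2 + (ω.2 : ℝ) ^ 2 = r ^ 2) then
            c ω * Complex.exp (2 * (π : ℂ) * Complex.I *
              ((ω.1 : ℂ) * (x : ℂ) + (ω.2 : ℂ) * (y : ℂ)))
          else 0‖ ^ 4) ^ ((1 : ℝ) / 4)
      ≤ (5 : ℝ) ^ ((1 : ℝ) / 4) * (∑' ω : ℤ × ℤ, ‖c ω‖ ^ 2) ^ ((1 : ℝ) / 2) := by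
  set F := (finite_setOf_sq_add_sq_eq r).toFinset
  have hmem (ω : ℤ × ℤ) : ω ∈ F ↔ (ω.1 : ℝ) ^ 2 + (ω.2 : ℝ) ^ 2 = r ^ 2 := Set.Finite.mem_toFinset _
  have hF : ∀ ω ∈ F, ∀ ω' ∈ F, ω.1 ^ 2 + ω.2 ^ 2 = ω'.1 ^ 2 + ω'.2 ^ 2 := fun ω hω ω' hω' => by
    exact_mod_cast ((hmem ω).1 hω).trans ((hmem ω').1 hω').symm
  have hsum (x y : ℝ) : (∑' ω : ℤ × ℤ, if ((ω.1 : ℝ) ^ 2 + (ω.2 : ℝ) ^ 2 = r ^ 2) then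
      c ω * exp (2 * π * I * (ω.1 * x + ω.2 * y)) else 0) = ∑ ω ∈ F, c ω * torusChar ω (x, y) := by
    rw [tsum_eq_sum fun ω hω => if_neg (mt (hmem ω).2 hω)]
    exact sum_congr rfl fun ω hω => if_pos ((hmem ω).1 hω)
  simp only [hsum, ← integral_unitSquare_eq_iterated
    (f := fun z => ‖∑ ω ∈ F, c ω * torusChar ω z‖ ^ 4) (by fun_prop)]
  set S := ∑' ω, ‖c ω‖ ^ 2
  have hFS : ∑ ω ∈ F, ‖c ω‖ ^ 2 ≤ S := hc.sum_le_tsum F fun _ _ => sq_nonneg _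
  have hFS₀ : 0 ≤ ∑ ω ∈ F, ‖c ω‖ ^ 2 := sum_nonneg fun _ _ => sq_nonneg _
  calc _ ≤ (5 * S ^ 2) ^ ((1 : ℝ) / 4) := by
        refine rpow_le_rpow (integral_nonneg fun _ => by positivity)
          ((integral_unitSquare_norm_sum_pow_four_le hF c).trans ?_) (by norm_num)
        nlinarith
    _ = (5 : ℝ) ^ ((1 : ℝ) / 4) * S ^ ((1 : ℝ) / 2) := by
        rw [mul_rpow (by norm_num) (sq_nonneg S), ← rpow_natCast, ← rpow_mul (hFS₀.trans hFS)]
        norm_num
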